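/- Let C ⊆ ℝ^m be a nonempty closed convex cone, γ ∈ (0,1), and θ, z ∈ ℝ^m. Define g(z̃) = ‖θ‖²/2 - (1/2)‖θ - Π_C(z̃ + θ/(1-γ))‖² - ((1-γ)/2)‖z̃ - Π_C(z̃ + θ/(1-γ))‖² and f(z) = (γ(1-γ)/2)·dist²((z+θ)/(1-γ), C) - γ‖z+θ‖²/(2(1-γ)) - ‖z‖²/2. Then (1-γ)·g(z/(1-γ)) = f(z), and both equal -(γ/(2(1-γ)))‖Π_C(z+θ)‖² - ‖z‖²/2. -/

import Mathlib

/-!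
Write `s = 1 - γ`. For the nearest point `v` of a convex cone `C` to `u`, testing the
variational inequality against `0` and `2 • v` gives `⟪u - v, v⟫ = 0`, and the scaled
inequality shows that `s • v` is the nearest point to `s • u`. Hence, with `p` the nearest point
to `(z + θ) / s`, the nearest point to `z + θ` is `q = s • p` and `⟪z + θ, p⟫ = s ‖p‖²`.
Expanding the squared norms, all three expressions reduce to `-(γ s / 2) ‖p‖² - ‖z‖² / 2`.
-/

open RealInnerProductSpace

section NearestPoint

variable {E : Type*} [NormedAddCommGroup E] [InnerProductSpace ℝ E] {C : Set E} {u v : E}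

theorem Convex.inner_sub_nonpos_of_norm_sub_eq_infDist (hconv : Convex ℝ C) (hv : v ∈ C)
    (hmin : ‖u - v‖ = Metric.infDist u C) : ∀ w ∈ C, ⟪u - v, w - v⟫ ≤ 0 := by
  refine (norm_eq_iInf_iff_real_inner_le_zero hconv hv).mp ?_
  rw [hmin, Metric.infDist_eq_iInf]
  simp only [dist_eq_norm]

theorem eq_of_inner_sub_nonpos_of_inner_sub_nonpos {w : E} (hv : ⟪u - v, w - v⟫ ≤ 0)
    (hw : ⟪u - w, v - w⟫ ≤ 0) : v = w := by
  have hsum : ⟪u - v, w - v⟫ + ⟪u - w, v - w⟫ = ⟪w - v, w - v⟫ := by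
    rw [← neg_sub w v, inner_neg_right, ← sub_eq_add_neg, ← inner_sub_left,
      sub_sub_sub_cancel_left]
  have hle : ⟪w - v, w - v⟫ ≤ 0 := hsum ▸ add_nonpos hv hw
  exact (sub_eq_zero.mp (real_inner_self_nonpos.mp hle)).symm

variable (hcone : ∀ c ∈ C, ∀ r : ℝ, 0 ≤ r → r • c ∈ C)
include hcone

theorem inner_sub_self_eq_zero_of_cone (hv : v ∈ C) (hvi : ∀ w ∈ C, ⟪u - v, w - v⟫ ≤ 0) :
    ⟪u - v, v⟫ = 0 := by
  have h0 := hvi (0 • v) (hcone v hv 0 le_rfl)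
  have h2 := hvi ((2 : ℝ) • v) (hcone v hv 2 zero_le_two)
  rw [zero_smul, zero_sub, inner_neg_right] at h0
  rw [two_smul, add_sub_cancel_right] at h2
  linarith

theorem inner_smul_sub_nonpos_of_cone (hvi : ∀ w ∈ C, ⟪u - v, w - v⟫ ≤ 0) {s : ℝ} (hs : 0 < s) :
    ∀ w ∈ C, ⟪s • u - s • v, w - s • v⟫ ≤ 0 := by
  intro w hw
  have hw' : w - s • v = s • (s⁻¹ • w - v) := by
    rw [smul_sub, smul_inv_smul₀ hs.ne']
  rw [hw', ← smul_sub, real_inner_smul_left, real_inner_smul_right, ← mul_assoc]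
  exact mul_nonpos_of_nonneg_of_nonpos (by positivity)
    (hvi _ (hcone w hw _ (inv_nonneg.mpr hs.le)))

end NearestPoint

section DriverAlgebra

variable {E : Type*} [NormedAddCommGroup E] [InnerProductSpace ℝ E]

theorem inner_add_eq_of_inner_smul_sub_eq_zero {s : ℝ} (hs : s ≠ 0) {z θ p : E}
    (horth : ⟪(1 / s) • (z + θ) - p, p⟫ = 0) : ⟪z, p⟫ + ⟪θ, p⟫ = s * ‖p‖ ^ 2 := by
  rw [inner_sub_left, real_inner_smul_left, real_inner_self_eq_norm_sq, inner_add_left] at horth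
  field_simp at horth
  linarith

theorem power_driver_eq {γ : ℝ} (hγ : γ < 1) {z θ p : E}
    (horth : ⟪(1 / (1 - γ)) • (z + θ) - p, p⟫ = 0) :
    (1 - γ) * (‖θ‖ ^ 2 / 2 - (1 / 2) * ‖θ - p‖ ^ 2
        - (1 - γ) / 2 * ‖(1 / (1 - γ)) • z - p‖ ^ 2)
      = -(γ * (1 - γ) / 2) * ‖p‖ ^ 2 - ‖z‖ ^ 2 / 2 := by
  have hs : 0 < 1 - γ := sub_pos.mpr hγ
  have hzθ := inner_add_eq_of_inner_smul_sub_eq_zero hs.ne' horth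
  rw [norm_sub_sq_real θ p, norm_sub_sq_real, real_inner_smul_left, norm_smul,
    Real.norm_of_nonneg (by positivity)]
  field_simp
  linear_combination 2 * (1 - γ) * hzθ

theorem sekine_driver_eq {γ : ℝ} (hγ : γ < 1) {z θ p : E}
    (horth : ⟪(1 / (1 - γ)) • (z + θ) - p, p⟫ = 0) :
    γ * (1 - γ) / 2 * ‖(1 / (1 - γ)) • (z + θ) - p‖ ^ 2
        - γ * ‖z + θ‖ ^ 2 / (2 * (1 - γ)) - ‖z‖ ^ 2 / 2
      = -(γ * (1 - γ) / 2) * ‖p‖ ^ 2 - ‖z‖ ^ 2 / 2 := by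
  have hs : 0 < 1 - γ := sub_pos.mpr hγ
  have hpyth := norm_add_sq_eq_norm_sq_add_norm_sq_real horth
  rw [sub_add_cancel, norm_smul, Real.norm_of_nonneg (by positivity)] at hpyth
  field_simp at hpyth ⊢
  linear_combination -γ * hpyth

end DriverAlgebra

theorem power_driver_sekine_equivalence_general (m : ℕ) (γ : ℝ) (hγ : γ ∈ Set.Ioo (0:ℝ) 1)
    (z θ : EuclideanSpace ℝ (Fin m))
    (C : Set (EuclideanSpace ℝ (Fin m)))
    (hconv : Convex ℝ C)
    (hcone : ∀ c ∈ C, ∀ r : ℝ, 0 ≤ r → r • c ∈ C)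
    (p : EuclideanSpace ℝ (Fin m)) (hp : p ∈ C)
    (hpmin : ‖(1 / (1 - γ)) • (z + θ) - p‖ = Metric.infDist ((1 / (1 - γ)) • (z + θ)) C)
    (q : EuclideanSpace ℝ (Fin m)) (hq : q ∈ C)
    (hqmin : ‖(z + θ) - q‖ = Metric.infDist (z + θ) C) :
    (1 - γ) * (‖θ‖ ^ 2 / 2 - (1 / 2) * ‖θ - p‖ ^ 2
        - (1 - γ) / 2 * ‖(1 / (1 - γ)) • z - p‖ ^ 2)
      = γ * (1 - γ) / 2 * (Metric.infDist ((1 / (1 - γ)) • (z + θ)) C) ^ 2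
        - γ * ‖z + θ‖ ^ 2 / (2 * (1 - γ)) - ‖z‖ ^ 2 / 2 ∧
    γ * (1 - γ) / 2 * (Metric.infDist ((1 / (1 - γ)) • (z + θ)) C) ^ 2
        - γ * ‖z + θ‖ ^ 2 / (2 * (1 - γ)) - ‖z‖ ^ 2 / 2
      = -(γ / (2 * (1 - γ))) * ‖q‖ ^ 2 - ‖z‖ ^ 2 / 2 := by
  have hs : 0 < 1 - γ := sub_pos.mpr hγ.2
  have hpvi := hconv.inner_sub_nonpos_of_norm_sub_eq_infDist hp hpmin
  have horth := inner_sub_self_eq_zero_of_cone hcone hp hpvi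
  have hscaled : (1 - γ) • ((1 / (1 - γ)) • (z + θ)) = z + θ := by
    rw [smul_smul, mul_one_div_cancel hs.ne', one_smul]
  have hspvi := inner_smul_sub_nonpos_of_cone hcone hpvi hs
  rw [hscaled] at hspvi
  have hqp : (1 - γ) • p = q :=
    eq_of_inner_sub_nonpos_of_inner_sub_nonpos (hspvi q hq)
      (hconv.inner_sub_nonpos_of_norm_sub_eq_infDist hq hqmin _ (hcone p hp _ hs.le))
  rw [← hpmin, power_driver_eq hγ.2 horth, sekine_driver_eq hγ.2 horth, ← hqp, norm_smul,
    Real.norm_of_nonneg hs.le]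
  refine ⟨rfl, ?_⟩
  field_simp

theorem power_driver_sekine_equivalence (m : ℕ) (γ : ℝ) (hγ : γ ∈ Set.Ioo (0:ℝ) 1)
    (z θ : EuclideanSpace ℝ (Fin m))
    (C : Set (EuclideanSpace ℝ (Fin m)))
    (hC : IsClosed C) (hconv : Convex ℝ C) (h0 : (0 : EuclideanSpace ℝ (Fin m)) ∈ C)
    (hcone : ∀ c ∈ C, ∀ r : ℝ, 0 ≤ r → r • c ∈ C)
    (p : EuclideanSpace ℝ (Fin m)) (hp : p ∈ C)
    (hpmin : ‖(1 / (1 - γ)) • (z + θ) - p‖ = Metric.infDist ((1 / (1 - γ)) • (z + θ)) C)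
    (q : EuclideanSpace ℝ (Fin m)) (hq : q ∈ C)
    (hqmin : ‖(z + θ) - q‖ = Metric.infDist (z + θ) C) :
    (1 - γ) * (‖θ‖ ^ 2 / 2 - (1 / 2) * ‖θ - p‖ ^ 2
        - (1 - γ) / 2 * ‖(1 / (1 - γ)) • z - p‖ ^ 2)
      = γ * (1 - γ) / 2 * (Metric.infDist ((1 / (1 - γ)) • (z + θ)) C) ^ 2
        - γ * ‖z + θ‖ ^ 2 / (2 * (1 - γ)) - ‖z‖ ^ 2 / 2 ∧
    γ * (1 - γ) / 2 * (Metric.infDist ((1 / (1 - γ)) • (z + θ)) C) ^ 2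
        - γ * ‖z + θ‖ ^ 2 / (2 * (1 - γ)) - ‖z‖ ^ 2 / 2
      = -(γ / (2 * (1 - γ))) * ‖q‖ ^ 2 - ‖z‖ ^ 2 / 2 :=
  power_driver_sekine_equivalence_general m γ hγ z θ C hconv hcone p hp hpmin q hq hqmin
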